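/- r = b if and only if f(X1^a, X2^a) = f(X1^b, X2^a) almost surely with respect to the law of (X1^a, X2^a, X1^b), which is P_{X1,X2} ⊗ P_{X1}. -/

import Mathlib

open MeasureTheory ProbabilityTheory


lemma mul_int' {α : Type*} {m0 : MeasurableSpace α} {μ : Measure α} {f g : α → ℝ}
    (hf : MemLp f 2 μ) (hg : MemLp g 2 μ) : Integrable (fun x => f x * g x) μ := by
  have h := hg.smul (φ := f) hf (r := 1)
  rw [memLp_one_iff_integrable] at h
  exact h

lemma condexp_memL2 {α : Type*} {m m0 : MeasurableSpace α} (hm : m ≤ m0) {μ : Measure α}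
    [IsFiniteMeasure μ] {Y : α → ℝ} (hY2 : MemLp Y 2 μ) : MemLp (μ[Y|m]) 2 μ := by
  have hYi : Integrable Y μ := hY2.integrable one_le_two
  have heq : (↑(condExpL2 ℝ ℝ hm (hY2.toLp Y)) : α → ℝ) =ᵐ[μ] μ[Y|m] := by
    refine ae_eq_condExp_of_forall_setIntegral_eq hm hYi
      (fun s _ hμs => integrableOn_condExpL2_of_measure_ne_top hm hμs.ne _)
      (fun s hs hμs => ?_) (aestronglyMeasurable_condExpL2 hm _)
    rw [integral_condExpL2_eq hm (hY2.toLp Y) hs hμs.ne]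
    exact setIntegral_congr_ae (hm s hs) ((MemLp.coeFn_toLp hY2).mono fun x hx _ => hx)
  exact (Lp.memLp _).ae_eq heq

lemma condexp_orth {α : Type*} {m m0 : MeasurableSpace α} (hm : m ≤ m0) {μ : Measure α}
    [IsFiniteMeasure μ] {Y φ : α → ℝ} (hY2 : MemLp Y 2 μ)
    (hφm : AEStronglyMeasurable[m] φ μ) (hφ2 : MemLp φ 2 μ) :
    ∫ ω, (Y ω - (μ[Y|m]) ω) * φ ω ∂μ = 0 := by
  have hYi : Integrable Y μ := hY2.integrable one_le_two
  have hc2 : MemLp (μ[Y|m]) 2 μ := condexp_memL2 hm hY2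
  have hint1 : Integrable (fun ω => φ ω * Y ω) μ := mul_int' hφ2 hY2
  have hint2 : Integrable (fun ω => φ ω * (μ[Y|m]) ω) μ := mul_int' hφ2 hc2
  have hpull : μ[(fun ω => φ ω * Y ω)|m] =ᵐ[μ] fun ω => φ ω * (μ[Y|m]) ω :=
    condExp_mul_of_aestronglyMeasurable_left hφm hint1 hYi
  have h1 : ∫ ω, φ ω * Y ω ∂μ = ∫ ω, φ ω * (μ[Y|m]) ω ∂μ := by
    calc ∫ ω, φ ω * Y ω ∂μ
        = ∫ ω, (μ[(fun ω => φ ω * Y ω)|m]) ω ∂μ := (integral_condExp hm).symm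
      _ = ∫ ω, φ ω * (μ[Y|m]) ω ∂μ := integral_congr_ae hpull
  have h2 : ∫ ω, (Y ω - (μ[Y|m]) ω) * φ ω ∂μ
      = ∫ ω, φ ω * Y ω ∂μ - ∫ ω, φ ω * (μ[Y|m]) ω ∂μ := by
    rw [← integral_sub hint1 hint2]
    exact integral_congr_ae (Filter.Eventually.of_forall fun ω => by ring)
  rw [h2, h1, sub_self]


/-- `r = b` if and only if `f(X1ᵃ, X2ᵃ) = f(X1ᵇ, X2ᵃ)` almost surely
with respect to the law of `(X1ᵃ, X2ᵃ, X1ᵇ)`, which is `P_{X1,X2} ⊗ P_{X1}`. -/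
theorem reliance_eq_baseline_iff_shuffle_invariant
    {Ω : Type*} [MeasurableSpace Ω] (P : Measure Ω) [IsProbabilityMeasure P]
    {𝒳1 𝒳2 : Type*} [MeasurableSpace 𝒳1] [MeasurableSpace 𝒳2]
    (Y : Ω → ℝ) (X1 : Ω → 𝒳1) (X2 : Ω → 𝒳2)
    (hY : Measurable Y) (hX1 : Measurable X1) (hX2 : Measurable X2)
    (hY2 : MemLp Y 2 P)
    (f : 𝒳1 → 𝒳2 → ℝ)
    (hfmeas : Measurable (fun p : 𝒳1 × 𝒳2 => f p.1 p.2))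
    -- `f` is a version of the conditional expectation `E[Y ∣ X1, X2]`
    (hf : (fun ω => f (X1 ω) (X2 ω)) =ᵐ[P]
      P[Y | MeasurableSpace.comap (fun ω => (X1 ω, X2 ω)) inferInstance])
    -- absolute continuity of the product of marginals w.r.t. the joint law
    (hac : (P.map X1).prod (P.map X2) ≪ P.map (fun ω => (X1 ω, X2 ω)))
    -- `f(X1ᵇ, X2ᵃ)` is square-integrable over the coupling law
    (hf2 : MemLp (fun p : (ℝ × 𝒳1 × 𝒳2) × 𝒳1 => f p.2 p.1.2.2) 2
      ((P.map (fun ω => (Y ω, X1 ω, X2 ω))).prod (P.map X1)))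
    (r b : ℝ)
    (hr : r = ∫ p, (p.1.1 - f p.2 p.1.2.2) ^ 2
      ∂((P.map (fun ω => (Y ω, X1 ω, X2 ω))).prod (P.map X1)))
    (hb : b = ∫ q, (q.1 - f q.2.1 q.2.2) ^ 2
      ∂(P.map (fun ω => (Y ω, X1 ω, X2 ω)))) :
    (r = b ↔
      ∀ᵐ p ∂((P.map (fun ω => (X1 ω, X2 ω))).prod (P.map X1)),
        f p.1.1 p.1.2 = f p.2 p.1.2) := by
  have hg : Measurable (fun ω => (X1 ω, X2 ω)) := hX1.prodMk hX2
  have hm : MeasurableSpace.comap (fun ω => (X1 ω, X2 ω)) inferInstance ≤ ‹MeasurableSpace Ω› := hg.comap_le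
  have hT : Measurable (fun ω => (Y ω, X1 ω, X2 ω)) := hY.prodMk hg
  set μ : Measure (ℝ × 𝒳1 × 𝒳2) := P.map (fun ω => (Y ω, X1 ω, X2 ω)) with hμdef
  set ν : Measure 𝒳1 := P.map X1 with hνdef
  set μ12 : Measure (𝒳1 × 𝒳2) := P.map (fun ω => (X1 ω, X2 ω)) with hμ12def
  haveI : IsProbabilityMeasure μ := Measure.isProbabilityMeasure_map hT.aemeasurable
  haveI : IsProbabilityMeasure ν := Measure.isProbabilityMeasure_map hX1.aemeasurable
  haveI : IsProbabilityMeasure μ12 := Measure.isProbabilityMeasure_map hg.aemeasurable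
  -- measurability of the m-measurable pieces
  have hmg : Measurable[MeasurableSpace.comap (fun ω => (X1 ω, X2 ω)) inferInstance] (fun ω => (X1 ω, X2 ω)) := Measurable.of_comap_le le_rfl
  have hfXm : StronglyMeasurable[MeasurableSpace.comap (fun ω => (X1 ω, X2 ω)) inferInstance] (fun ω => f (X1 ω) (X2 ω)) :=
    (hfmeas.comp hmg).stronglyMeasurable
  have hfX2 : MemLp (fun ω => f (X1 ω) (X2 ω)) 2 P :=
    (condexp_memL2 hm hY2).ae_eq hf.symm
  -- L² facts on μ
  have hu : MemLp (fun q : ℝ × 𝒳1 × 𝒳2 => q.1) 2 μ := by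
    rw [hμdef]
    exact (memLp_map_measure_iff measurable_fst.aestronglyMeasurable hT.aemeasurable).mpr hY2
  have hvmeas : Measurable (fun q : ℝ × 𝒳1 × 𝒳2 => f q.2.1 q.2.2) :=
    hfmeas.comp measurable_snd
  have hvμ : MemLp (fun q : ℝ × 𝒳1 × 𝒳2 => f q.2.1 q.2.2) 2 μ := by
    rw [hμdef]
    exact (memLp_map_measure_iff hvmeas.aestronglyMeasurable hT.aemeasurable).mpr hfX2
  -- lifting from μ to μ.prod ν
  have hfstmap : (μ.prod ν).map Prod.fst = μ := by
    rw [Measure.map_fst_prod]; simp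
  have lift2 : ∀ (h : ℝ × 𝒳1 × 𝒳2 → ℝ), MemLp h 2 μ →
      MemLp (fun p : (ℝ × 𝒳1 × 𝒳2) × 𝒳1 => h p.1) 2 (μ.prod ν) := by
    intro h hh
    have h1 : AEStronglyMeasurable h ((μ.prod ν).map Prod.fst) := by rw [hfstmap]; exact hh.1
    exact (memLp_map_measure_iff h1 measurable_fst.aemeasurable).mp (by rwa [hfstmap])
  have liftInt : ∀ (h : ℝ × 𝒳1 × 𝒳2 → ℝ), AEStronglyMeasurable h μ →
      ∫ q, h q ∂μ = ∫ p, h p.1 ∂(μ.prod ν) := by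
    intro h hh
    calc ∫ q, h q ∂μ = ∫ q, h q ∂((μ.prod ν).map Prod.fst) := by rw [hfstmap]
      _ = ∫ p, h p.1 ∂(μ.prod ν) :=
        integral_map measurable_fst.aemeasurable (by rwa [hfstmap])
  -- key L² memberships on the product
  have hA2 : MemLp (fun p : (ℝ × 𝒳1 × 𝒳2) × 𝒳1 => p.1.1 - f p.1.2.1 p.1.2.2) 2 (μ.prod ν) :=
    lift2 _ (hu.sub hvμ)
  have hv2 : MemLp (fun p : (ℝ × 𝒳1 × 𝒳2) × 𝒳1 => f p.1.2.1 p.1.2.2) 2 (μ.prod ν) :=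
    lift2 _ hvμ
  have hB2 : MemLp (fun p : (ℝ × 𝒳1 × 𝒳2) × 𝒳1 => f p.1.2.1 p.1.2.2 - f p.2 p.1.2.2) 2
      (μ.prod ν) := hv2.sub hf2
  have hAA : Integrable (fun p : (ℝ × 𝒳1 × 𝒳2) × 𝒳1 =>
      (p.1.1 - f p.1.2.1 p.1.2.2) ^ 2) (μ.prod ν) := hA2.integrable_sq
  have hBB : Integrable (fun p : (ℝ × 𝒳1 × 𝒳2) × 𝒳1 =>
      (f p.1.2.1 p.1.2.2 - f p.2 p.1.2.2) ^ 2) (μ.prod ν) := hB2.integrable_sq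
  have hAB : Integrable (fun p : (ℝ × 𝒳1 × 𝒳2) × 𝒳1 =>
      (p.1.1 - f p.1.2.1 p.1.2.2) * (f p.1.2.1 p.1.2.2 - f p.2 p.1.2.2)) (μ.prod ν) :=
    mul_int' hA2 hB2
  have hAv : Integrable (fun p : (ℝ × 𝒳1 × 𝒳2) × 𝒳1 =>
      (p.1.1 - f p.1.2.1 p.1.2.2) * f p.1.2.1 p.1.2.2) (μ.prod ν) := mul_int' hA2 hv2
  have hAw : Integrable (fun p : (ℝ × 𝒳1 × 𝒳2) × 𝒳1 =>
      (p.1.1 - f p.1.2.1 p.1.2.2) * f p.2 p.1.2.2) (μ.prod ν) := mul_int' hA2 hf2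
  -- first cross term
  have hK1 : ∫ p, (p.1.1 - f p.1.2.1 p.1.2.2) * f p.1.2.1 p.1.2.2 ∂(μ.prod ν) = 0 := by
    have h1 : ∫ q, (q.1 - f q.2.1 q.2.2) * f q.2.1 q.2.2 ∂μ
        = ∫ ω, (Y ω - f (X1 ω) (X2 ω)) * f (X1 ω) (X2 ω) ∂P := by
      rw [hμdef]
      exact integral_map hT.aemeasurable
        ((measurable_fst.sub hvmeas).mul hvmeas).aestronglyMeasurable
    have h2 : ∫ ω, (Y ω - f (X1 ω) (X2 ω)) * f (X1 ω) (X2 ω) ∂P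
        = ∫ ω, (Y ω - (P[Y|MeasurableSpace.comap (fun ω => (X1 ω, X2 ω)) inferInstance]) ω) * f (X1 ω) (X2 ω) ∂P :=
      integral_congr_ae (by filter_upwards [hf] with ω hω; rw [hω])
    rw [← liftInt (fun q => (q.1 - f q.2.1 q.2.2) * f q.2.1 q.2.2) ((measurable_fst.sub hvmeas).mul hvmeas).aestronglyMeasurable, h1, h2]
    exact condexp_orth hm hY2 hfXm.aestronglyMeasurable hfX2
  -- second cross term
  have hK2 : ∫ p, (p.1.1 - f p.1.2.1 p.1.2.2) * f p.2 p.1.2.2 ∂(μ.prod ν) = 0 := by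
    have hwslice : ∀ t : 𝒳1, Measurable (fun q : ℝ × 𝒳1 × 𝒳2 => f t q.2.2) := fun t =>
      hfmeas.comp (measurable_const.prodMk measurable_snd.snd)
    have hslice : ∀ᵐ t ∂ν, MemLp (fun q : ℝ × 𝒳1 × 𝒳2 => f t q.2.2) 2 μ := by
      have hsq := hf2.integrable_sq.prod_left_ae
      filter_upwards [hsq] with t ht
      exact (memLp_two_iff_integrable_sq (hwslice t).aestronglyMeasurable).mpr ht
    have inner0 : ∀ᵐ t ∂ν, ∫ q, (q.1 - f q.2.1 q.2.2) * f t q.2.2 ∂μ = 0 := by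
      filter_upwards [hslice] with t ht
      have hφ2 : MemLp (fun ω => f t (X2 ω)) 2 P := by
        rw [hμdef] at ht
        exact (memLp_map_measure_iff (hwslice t).aestronglyMeasurable hT.aemeasurable).mp ht
      have hφm : StronglyMeasurable[MeasurableSpace.comap (fun ω => (X1 ω, X2 ω)) inferInstance] (fun ω => f t (X2 ω)) :=
        ((hfmeas.comp (measurable_const.prodMk measurable_snd)).comp hmg).stronglyMeasurable
      have h1 : ∫ q, (q.1 - f q.2.1 q.2.2) * f t q.2.2 ∂μ
          = ∫ ω, (Y ω - f (X1 ω) (X2 ω)) * f t (X2 ω) ∂P := by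
        rw [hμdef]
        exact integral_map hT.aemeasurable
          ((measurable_fst.sub hvmeas).mul (hwslice t)).aestronglyMeasurable
      have h2 : ∫ ω, (Y ω - f (X1 ω) (X2 ω)) * f t (X2 ω) ∂P
          = ∫ ω, (Y ω - (P[Y|MeasurableSpace.comap (fun ω => (X1 ω, X2 ω)) inferInstance]) ω) * f t (X2 ω) ∂P :=
        integral_congr_ae (by filter_upwards [hf] with ω hω; rw [hω])
      rw [h1, h2]
      exact condexp_orth hm hY2 hφm.aestronglyMeasurable hφ2
    calc ∫ p, (p.1.1 - f p.1.2.1 p.1.2.2) * f p.2 p.1.2.2 ∂(μ.prod ν)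
        = ∫ t, ∫ q, (q.1 - f q.2.1 q.2.2) * f t q.2.2 ∂μ ∂ν := integral_prod_symm _ hAw
      _ = ∫ _t, (0 : ℝ) ∂ν := integral_congr_ae inner0
      _ = 0 := integral_zero _ _
  -- cross term
  have hcross : ∫ p, (p.1.1 - f p.1.2.1 p.1.2.2) * (f p.1.2.1 p.1.2.2 - f p.2 p.1.2.2)
      ∂(μ.prod ν) = 0 := by
    calc ∫ p, (p.1.1 - f p.1.2.1 p.1.2.2) * (f p.1.2.1 p.1.2.2 - f p.2 p.1.2.2) ∂(μ.prod ν)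
        = ∫ p, ((p.1.1 - f p.1.2.1 p.1.2.2) * f p.1.2.1 p.1.2.2
            - (p.1.1 - f p.1.2.1 p.1.2.2) * f p.2 p.1.2.2) ∂(μ.prod ν) :=
          integral_congr_ae (Filter.Eventually.of_forall fun p => by ring)
      _ = ∫ p, (p.1.1 - f p.1.2.1 p.1.2.2) * f p.1.2.1 p.1.2.2 ∂(μ.prod ν)
            - ∫ p, (p.1.1 - f p.1.2.1 p.1.2.2) * f p.2 p.1.2.2 ∂(μ.prod ν) :=
          integral_sub hAv hAw
      _ = 0 := by rw [hK1, hK2, sub_zero]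
  -- lift b to the product
  have hbπ : b = ∫ p, (p.1.1 - f p.1.2.1 p.1.2.2) ^ 2 ∂(μ.prod ν) := by
    rw [hb]
    exact liftInt _ ((measurable_fst.sub hvmeas).pow_const 2).aestronglyMeasurable
  -- the main identity
  have hmain : r = b + ∫ p, (f p.1.2.1 p.1.2.2 - f p.2 p.1.2.2) ^ 2 ∂(μ.prod ν) := by
    have hexp : r = ∫ p, ((p.1.1 - f p.1.2.1 p.1.2.2) ^ 2
        + (2 * ((p.1.1 - f p.1.2.1 p.1.2.2) * (f p.1.2.1 p.1.2.2 - f p.2 p.1.2.2))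
          + (f p.1.2.1 p.1.2.2 - f p.2 p.1.2.2) ^ 2)) ∂(μ.prod ν) := by
      rw [hr]
      exact integral_congr_ae (Filter.Eventually.of_forall fun p => by ring)
    have i23 : Integrable (fun p : (ℝ × 𝒳1 × 𝒳2) × 𝒳1 =>
        2 * ((p.1.1 - f p.1.2.1 p.1.2.2) * (f p.1.2.1 p.1.2.2 - f p.2 p.1.2.2))
          + (f p.1.2.1 p.1.2.2 - f p.2 p.1.2.2) ^ 2) (μ.prod ν) := (hAB.const_mul 2).add hBB
    rw [hexp, integral_add hAA i23, integral_add (hAB.const_mul 2) hBB,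
      integral_const_mul 2 _, hcross, hbπ]
    ring
  -- nonnegativity and zero-characterization of the remainder
  have hiff0 : r = b ↔
      (fun p : (ℝ × 𝒳1 × 𝒳2) × 𝒳1 => f p.1.2.1 p.1.2.2) =ᵐ[μ.prod ν]
        (fun p => f p.2 p.1.2.2) := by
    rw [hmain]
    constructor
    · intro h
      have h0 : ∫ p, (f p.1.2.1 p.1.2.2 - f p.2 p.1.2.2) ^ 2 ∂(μ.prod ν) = 0 := by linarith
      have := (integral_eq_zero_iff_of_nonneg_ae
        (Filter.Eventually.of_forall fun p => sq_nonneg _) hBB).mp h0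
      filter_upwards [this] with p hp
      exact sub_eq_zero.mp ((pow_eq_zero_iff two_ne_zero).mp hp)
    · intro h
      have : ∫ p, (f p.1.2.1 p.1.2.2 - f p.2 p.1.2.2) ^ 2 ∂(μ.prod ν) = 0 := by
        rw [show (0:ℝ) = ∫ (_ : (ℝ × 𝒳1 × 𝒳2) × 𝒳1), (0:ℝ) ∂(μ.prod ν) by simp]
        refine integral_congr_ae ?_
        filter_upwards [h] with p hp
        rw [hp, sub_self]
        norm_num
      rw [this, add_zero]
  -- transfer to the stated measure
  have hmapS : (μ.prod ν).map (Prod.map Prod.snd id) = μ12.prod ν := by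
    rw [← Measure.map_prod_map _ _ measurable_snd measurable_id, Measure.map_id, hμdef,
      Measure.map_map measurable_snd hT, hμ12def]
    rfl
  have htarget : (∀ᵐ p ∂(μ12.prod ν), f p.1.1 p.1.2 = f p.2 p.1.2) ↔
      (∀ᵐ p ∂(μ.prod ν), f p.1.2.1 p.1.2.2 = f p.2 p.1.2.2) := by
    rw [← hmapS]
    have hs : MeasurableSet {p : (𝒳1 × 𝒳2) × 𝒳1 | f p.1.1 p.1.2 = f p.2 p.1.2} :=
      measurableSet_eq_fun (hfmeas.comp measurable_fst)
        (hfmeas.comp (measurable_snd.prodMk measurable_fst.snd))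
    rw [ae_map_iff ((measurable_snd.prodMap measurable_id).aemeasurable) hs]
    rfl
  rw [hiff0, htarget]
  constructor
  · intro h; filter_upwards [h] with p hp; exact hp
  · intro h; filter_upwards [h] with p hp; exact hp
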